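/- arXiv:2402.05618 — 2 statements merged into one kernel-verified Lean document; each statement's English description precedes it below -/
import Mathlib

section
/- Let h : (0,∞) → [0,∞) be measurable and suppose there exist C > 0 and γ ∈ (0,1) such that ∫_{1+t}^{1+2t} h(τ)² dτ ≤ C t^{−γ} for all t > 0. Then for all t ≥ 2, ∫_1^t h(τ) dτ ≤ C' t^{(1−γ)/2} (if γ < 1) for some constant C' depending only on C and γ. -/
/-!
On each dyadic block `(1 + s, 1 + 2s]`, Cauchy–Schwarz bounds `∫ h` by
`(∫ h²)^{1/2} s^{1/2} ≤ √C s^{(1-γ)/2}`. The blocks with `s = t / 2^{n+1}` cover `(1, 1 + t]`,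
and since `(1-γ)/2 > 0` the resulting bounds form a geometric series summing to
`√C t^{(1-γ)/2} / (2^{(1-γ)/2} - 1)`.
-/

open MeasureTheory Set
open scoped ENNReal

theorem lintegral_sq_le_lintegral_sq_mul_measure_univ {α : Type*} [MeasurableSpace α]
    {μ : Measure α} {f : α → ℝ≥0∞} (hf : AEMeasurable f μ) :
    (∫⁻ a, f a ∂μ) ^ 2 ≤ (∫⁻ a, f a ^ 2 ∂μ) * μ univ := by
  have hCS := ENNReal.lintegral_mul_le_Lp_mul_Lq μ Real.HolderConjugate.two_two hf
    (aemeasurable_const (b := 1))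
  simp only [Pi.mul_apply, mul_one, one_pow, lintegral_const, one_mul,
    ENNReal.rpow_two] at hCS
  calc (∫⁻ a, f a ∂μ) ^ 2
      ≤ ((∫⁻ a, f a ^ 2 ∂μ) ^ (1 / 2 : ℝ) * μ univ ^ (1 / 2 : ℝ)) ^ 2 := by gcongr
    _ = (∫⁻ a, f a ^ 2 ∂μ) * μ univ := by
      rw [← ENNReal.rpow_two, ← ENNReal.mul_rpow_of_nonneg _ _ (by norm_num),
        ← ENNReal.rpow_mul]
      norm_num

theorem lintegral_ofReal_le_sqrt_mul_sqrt {α : Type*} [MeasurableSpace α] {μ : Measure α}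
    {h : α → ℝ} (hh : AEMeasurable h μ) {A B : ℝ} (hA : 0 ≤ A) (hB : 0 ≤ B)
    (hsq : ∫⁻ a, ENNReal.ofReal (h a ^ 2) ∂μ ≤ ENNReal.ofReal A)
    (hμ : μ univ ≤ ENNReal.ofReal B) :
    ∫⁻ a, ENNReal.ofReal (h a) ∂μ ≤ ENNReal.ofReal (√A * √B) := by
  have hpow : ∀ a, ENNReal.ofReal (h a) ^ 2 ≤ ENNReal.ofReal (h a ^ 2) := by
    intro a
    rcases le_total 0 (h a) with ha | ha
    · rw [ENNReal.ofReal_pow ha]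
    · simp [ENNReal.ofReal_of_nonpos ha]
  rw [← ENNReal.pow_le_pow_left_iff two_ne_zero]
  calc (∫⁻ a, ENNReal.ofReal (h a) ∂μ) ^ 2
      ≤ (∫⁻ a, ENNReal.ofReal (h a) ^ 2 ∂μ) * μ univ :=
        lintegral_sq_le_lintegral_sq_mul_measure_univ hh.ennreal_ofReal
    _ ≤ ENNReal.ofReal A * ENNReal.ofReal B := by
        gcongr
        exact (lintegral_mono hpow).trans hsq
    _ = ENNReal.ofReal (√A * √B) ^ 2 := by
        rw [← ENNReal.ofReal_pow (by positivity), mul_pow, Real.sq_sqrt hA, Real.sq_sqrt hB,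
          ENNReal.ofReal_mul hA]

theorem lintegral_Ioc_ofReal_le_of_lintegral_sq_le {h : ℝ → ℝ} (hh : AEMeasurable h)
    {a C γ s : ℝ} (hC : 0 ≤ C) (hs : 0 < s)
    (hsq : ∫⁻ τ in Ioc (a + s) (a + 2 * s), ENNReal.ofReal (h τ ^ 2) ≤
      ENNReal.ofReal (C * s ^ (-γ))) :
    ∫⁻ τ in Ioc (a + s) (a + 2 * s), ENNReal.ofReal (h τ) ≤
      ENNReal.ofReal (√C * s ^ ((1 - γ) / 2)) := by
  have hvol : volume.restrict (Ioc (a + s) (a + 2 * s)) univ ≤ ENNReal.ofReal s := by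
    rw [Measure.restrict_apply_univ, Real.volume_Ioc]
    exact ENNReal.ofReal_le_ofReal (by linarith)
  have hroot : √(C * s ^ (-γ)) * √s = √C * s ^ ((1 - γ) / 2) := by
    rw [Real.sqrt_mul hC, Real.sqrt_eq_rpow, Real.sqrt_eq_rpow, Real.sqrt_eq_rpow,
      ← Real.rpow_mul hs.le, mul_assoc, ← Real.rpow_add hs]
    ring_nf
  rw [← hroot]
  exact lintegral_ofReal_le_sqrt_mul_sqrt hh.restrict (by positivity) hs.le hsq hvol

theorem Ioc_subset_iUnion_Ioc_div_two_pow (a t : ℝ) :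
    Ioc a (a + t) ⊆ ⋃ n : ℕ, Ioc (a + t / 2 ^ (n + 1)) (a + t / 2 ^ n) := by
  rintro τ ⟨haτ, hτt⟩
  obtain ⟨n, hn, hn'⟩ := exists_nat_pow_near (x := t / (τ - a)) (y := (2 : ℝ))
    ((one_le_div (by linarith)).2 (by linarith)) one_lt_two
  rw [le_div_iff₀ (by linarith)] at hn
  rw [div_lt_iff₀ (by linarith)] at hn'
  have hlow : t / 2 ^ (n + 1) < τ - a := (div_lt_iff₀ (by positivity)).2 (by linarith)
  have hup : τ - a ≤ t / 2 ^ n := (le_div_iff₀ (by positivity)).2 (by linarith)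
  exact mem_iUnion.2 ⟨n, by linarith, by linarith⟩

theorem hasSum_rpow_div_two_pow_succ {p : ℝ} (hp : 0 < p) {t : ℝ} (ht : 0 ≤ t) :
    HasSum (fun n : ℕ ↦ (t / 2 ^ (n + 1)) ^ p) (t ^ p / (2 ^ p - 1)) := by
  have hρ : 1 < (2 : ℝ) ^ p := Real.one_lt_rpow one_lt_two hp
  have hterm : ∀ n : ℕ, (t / 2 ^ (n + 1)) ^ p = t ^ p * (2 ^ p)⁻¹ * ((2 ^ p)⁻¹) ^ n := by
    intro n
    rw [Real.div_rpow ht (by positivity), ← Real.rpow_pow_comm zero_le_two, inv_pow, pow_succ]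
    ring
  have hval : t ^ p / (2 ^ p - 1) = t ^ p * (2 ^ p)⁻¹ * (1 - (2 ^ p)⁻¹)⁻¹ := by
    field_simp
  simpa only [hterm, hval] using
    (hasSum_geometric_of_lt_one (by positivity) (inv_lt_one_of_one_lt₀ hρ)).mul_left
      (t ^ p * (2 ^ p)⁻¹)

theorem lintegral_Ioc_le_of_dyadic {μ : Measure ℝ} {g : ℝ → ℝ≥0∞} {a K p : ℝ} (hK : 0 ≤ K)
    (hp : 0 < p)
    (hblock : ∀ s > 0, ∫⁻ τ in Ioc (a + s) (a + 2 * s), g τ ∂μ ≤ ENNReal.ofReal (K * s ^ p))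
    {t : ℝ} (ht : 0 < t) :
    ∫⁻ τ in Ioc a (a + t), g τ ∂μ ≤ ENNReal.ofReal (K * t ^ p / (2 ^ p - 1)) := by
  have hsum := (hasSum_rpow_div_two_pow_succ hp ht.le).mul_left K
  calc ∫⁻ τ in Ioc a (a + t), g τ ∂μ
      ≤ ∫⁻ τ in ⋃ n : ℕ, Ioc (a + t / 2 ^ (n + 1)) (a + t / 2 ^ n), g τ ∂μ :=
        lintegral_mono_set (Ioc_subset_iUnion_Ioc_div_two_pow a t)
    _ ≤ ∑' n : ℕ, ∫⁻ τ in Ioc (a + t / 2 ^ (n + 1)) (a + t / 2 ^ n), g τ ∂μ :=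
        lintegral_iUnion_le _ _
    _ ≤ ∑' n : ℕ, ENNReal.ofReal (K * (t / 2 ^ (n + 1)) ^ p) := by
        refine ENNReal.tsum_le_tsum fun n ↦ ?_
        have h2 : 2 * (t / 2 ^ (n + 1)) = t / 2 ^ n := by rw [pow_succ]; field_simp
        simpa only [h2] using hblock (t / 2 ^ (n + 1)) (by positivity)
    _ = ENNReal.ofReal (K * t ^ p / (2 ^ p - 1)) := by
        rw [← ENNReal.ofReal_tsum_of_nonneg (fun n ↦ by positivity) hsum.summable, hsum.tsum_eq,
          mul_div_assoc]

theorem dyadic_l2_to_l1_general (h : ℝ → ℝ) (C γ : ℝ) (hC : 0 < C) (hγ1 : γ < 1)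
    (hmeas : Measurable h)
    (hyp : ∀ t : ℝ, 0 < t →
      (∫⁻ τ in Set.Ioc (1+t) (1+2*t), ENNReal.ofReal (h τ ^ 2)) ≤
        ENNReal.ofReal (C * t ^ (-γ))) :
    ∃ C' > (0:ℝ), ∀ t : ℝ, 2 ≤ t →
      (∫⁻ τ in Set.Ioc (1:ℝ) t, ENNReal.ofReal (h τ)) ≤
        ENNReal.ofReal (C' * t ^ ((1-γ)/2)) := by
  have hp : 0 < (1 - γ) / 2 := by linarith
  have hρ : 0 < 2 ^ ((1 - γ) / 2) - (1 : ℝ) := sub_pos.2 (Real.one_lt_rpow one_lt_two hp)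
  refine ⟨√C / (2 ^ ((1 - γ) / 2) - 1), by positivity, fun t ht ↦ ?_⟩
  calc ∫⁻ τ in Ioc 1 t, ENNReal.ofReal (h τ)
      ≤ ∫⁻ τ in Ioc 1 (1 + t), ENNReal.ofReal (h τ) :=
        lintegral_mono_set (Ioc_subset_Ioc_right (by linarith))
    _ ≤ ENNReal.ofReal (√C * t ^ ((1 - γ) / 2) / (2 ^ ((1 - γ) / 2) - 1)) :=
        lintegral_Ioc_le_of_dyadic (Real.sqrt_nonneg C) hp
          (fun s hs ↦ lintegral_Ioc_ofReal_le_of_lintegral_sq_le hmeas.aemeasurable hC.le hs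
            (hyp s hs))
          (by linarith)
    _ = ENNReal.ofReal (√C / (2 ^ ((1 - γ) / 2) - 1) * t ^ ((1 - γ) / 2)) := by
        rw [div_mul_eq_mul_div₀]

/-- Hishida-type lemma: if `∫_{1+t}^{1+2t} h(τ)² dτ ≤ C t^{−γ}` for all `t > 0` with
`γ ∈ (0,1)`, then `∫_1^t h(τ) dτ ≤ C' t^{(1−γ)/2}` for all `t ≥ 2`. -/
theorem dyadic_l2_to_l1 (h : ℝ → ℝ) (C γ : ℝ) (hC : 0 < C) (hγ0 : 0 < γ) (hγ1 : γ < 1)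
    (hmeas : Measurable h) (hnonneg : ∀ τ, 0 ≤ h τ)
    (hyp : ∀ t : ℝ, 0 < t →
      (∫⁻ τ in Set.Ioc (1+t) (1+2*t), ENNReal.ofReal (h τ ^ 2)) ≤
        ENNReal.ofReal (C * t ^ (-γ))) :
    ∃ C' > (0:ℝ), ∀ t : ℝ, 2 ≤ t →
      (∫⁻ τ in Set.Ioc (1:ℝ) t, ENNReal.ofReal (h τ)) ≤
        ENNReal.ofReal (C' * t ^ ((1-γ)/2)) :=
  dyadic_l2_to_l1_general h C γ hC hγ1 hmeas hyp
end

section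
/- Let 0 ≤ a < 1, σ₂ > 0, b > 0, s₀ < q with −(3/2)(1/s₀ − 1/r) < −1 in appropriate ranges, and consider the Duhamel bound ‖v(t)‖ ≤ C t^{−b}‖f‖ + ‖f‖∫₀ᵗ (t−τ)^{−b}(1+t−τ)^{−β} τ^{−1+a}(1+τ)^{1−a−σ₂} dτ with β > 1 − b. Then for t ≥ 2, ‖v(t)‖ ≤ C t^{−min{σ₂, b}} ‖f‖. -/
/-!
With `K(s) = s^{-b}(1+s)^{-β}` and `F(τ) = τ^{a-1}(1+τ)^{1-a-σ₂}` the integral is the convolution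
`∫₀ᵗ K(t - τ) F(τ) dτ`; put `m = min σ₂ b` and split at `t/2`.
On `(0, t/2]`, `K(t - τ) ≲ t^{-(b+β)}`, while `F(τ) ≲ τ^{a-1}` on `(0, 1]` and `F(τ) ≲ τ^{-m}` on
`[1, ∞)` give `∫₀^{t/2} F ≲ 1 + t^{1-m}`; since `b + β > 1` the product is `≲ t^{-m}`.
On `(t/2, t]`, `F(τ) ≲ t^{-m}`, and `∫₀^{t/2} K ≤ 1/(1-b) + 1/(b+β-1)` because `K(s) ≤ s^{-b}` and
`K(s) ≤ s^{-(b+β)}`.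

This needs `0 < a` and `b < 1`. Otherwise the integrand is not integrable at `τ = 0` (resp.
`τ = t`), so its Bochner integral is `0` and only the linear term `C t^{-b}‖f‖` remains.
-/

open MeasureTheory Set

lemma rpow_le_max_of_mem_Icc {L U x : ℝ} (hL : 0 < L) (hx : x ∈ Icc L U) (e : ℝ) :
    x ^ e ≤ max (L ^ e) (U ^ e) := by
  rcases le_total 0 e with he | he
  · exact le_max_of_le_right (Real.rpow_le_rpow (hL.le.trans hx.1) hx.2 he)
  · exact le_max_of_le_left (Real.rpow_le_rpow_of_nonpos hL hx.1 he)

lemma min_le_rpow_of_mem_Icc {L U x : ℝ} (hL : 0 < L) (hx : x ∈ Icc L U) (e : ℝ) :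
    min (L ^ e) (U ^ e) ≤ x ^ e := by
  rcases le_total 0 e with he | he
  · exact min_le_of_left_le (Real.rpow_le_rpow hL.le hx.1 he)
  · exact min_le_of_right_le (Real.rpow_le_rpow_of_nonpos (hL.trans_le hx.1) hx.2 he)

lemma one_add_rpow_le_of_mem_Icc {x : ℝ} (hx : x ∈ Icc 0 1) (e : ℝ) :
    (1 + x) ^ e ≤ max 1 (2 ^ e) := by
  simpa using rpow_le_max_of_mem_Icc one_pos ⟨by linarith [hx.1], by linarith [hx.2]⟩ e

lemma min_le_one_add_rpow_of_mem_Icc {x : ℝ} (hx : x ∈ Icc 0 1) (e : ℝ) :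
    min 1 (2 ^ e) ≤ (1 + x) ^ e := by
  simpa using min_le_rpow_of_mem_Icc one_pos ⟨by linarith [hx.1], by linarith [hx.2]⟩ e

lemma one_add_rpow_le_of_one_le {x : ℝ} (hx : 1 ≤ x) (e : ℝ) :
    (1 + x) ^ e ≤ max 1 (2 ^ e) * x ^ e := by
  have hx0 : 0 < x := by linarith
  rw [show 1 + x = (1 + x⁻¹) * x by field_simp; ring, Real.mul_rpow (by positivity) hx0.le]
  gcongr
  exact one_add_rpow_le_of_mem_Icc ⟨inv_nonneg.2 hx0.le, inv_le_one_of_one_le₀ hx⟩ e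

section Integrability

variable {α : Type*} [MeasurableSpace α] {μ : Measure α} {s : Set α} {f g : α → ℝ}

lemma integrableOn_of_nonneg_of_le (hg : IntegrableOn g s μ) (hs : MeasurableSet s)
    (hf : Measurable f) (hf0 : ∀ x ∈ s, 0 ≤ f x) (hfg : ∀ x ∈ s, f x ≤ g x) :
    IntegrableOn f s μ :=
  hg.mono' hf.aestronglyMeasurable <| ae_restrict_of_forall_mem hs fun x hx => by
    rw [Real.norm_of_nonneg (hf0 x hx)]
    exact hfg x hx

lemma integrableOn_of_const_mul_le {c : ℝ} (hf : IntegrableOn f s μ) (hs : MeasurableSet s)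
    (hc : 0 < c) (hg : Measurable g) (hg0 : ∀ x ∈ s, 0 ≤ g x) (hgf : ∀ x ∈ s, c * g x ≤ f x) :
    IntegrableOn g s μ :=
  integrableOn_of_nonneg_of_le (hf.const_mul c⁻¹) hs hg hg0 fun x hx => by
    rw [le_inv_mul_iff₀ hc]
    exact hgf x hx

end Integrability

lemma integrableOn_Ioc_comp_sub_left {g : ℝ → ℝ} {x y : ℝ} (hxy : x ≤ y)
    (hg : IntegrableOn g (Ioc x y)) (c : ℝ) :
    IntegrableOn (fun τ => g (c - τ)) (Ioc (c - y) (c - x)) := by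
  have := ((intervalIntegrable_iff_integrableOn_Ioc_of_le hxy).2 hg).comp_sub_left c
  exact (intervalIntegrable_iff_integrableOn_Ioc_of_le (by linarith)).1 this.symm

lemma setIntegral_Ioc_comp_sub_left (g : ℝ → ℝ) {x y : ℝ} (hxy : x ≤ y) (c : ℝ) :
    ∫ τ in Ioc (c - y) (c - x), g (c - τ) = ∫ s in Ioc x y, g s := by
  rw [← intervalIntegral.integral_of_le (by linarith), ← intervalIntegral.integral_of_le hxy,
    intervalIntegral.integral_comp_sub_left, sub_sub_cancel, sub_sub_cancel]

lemma not_integrableOn_Ioc_zero_one_rpow {r : ℝ} (hr : r ≤ -1) :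
    ¬ IntegrableOn (fun x : ℝ => x ^ r) (Ioc 0 1) := by
  rw [integrableOn_Ioc_iff_integrableOn_Ioo, intervalIntegral.integrableOn_Ioo_rpow_iff one_pos]
  linarith

lemma integrableOn_Ioc_zero_and_setIntegral_le_of_le_rpow {g : ℝ → ℝ} {A B p q X : ℝ}
    (hp : p < 1) (hq : q ≠ 1) (hX : 1 ≤ X) (hg : Measurable g) (hg0 : ∀ s ∈ Ioc 0 X, 0 ≤ g s)
    (hg_near : ∀ s ∈ Ioc 0 1, g s ≤ A * s ^ (-p)) (hg_far : ∀ s ∈ Ioc 1 X, g s ≤ B * s ^ (-q)) :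
    IntegrableOn g (Ioc 0 X) ∧
      ∫ s in Ioc 0 X, g s ≤ A / (1 - p) + B * ((X ^ (1 - q) - 1) / (1 - q)) := by
  have h_near : IntegrableOn (fun s => A * s ^ (-p)) (Ioc 0 1) :=
    ((intervalIntegrable_iff_integrableOn_Ioc_of_le zero_le_one).1
      (intervalIntegral.intervalIntegrable_rpow' (by linarith))).const_mul A
  have h_far : IntegrableOn (fun s => B * s ^ (-q)) (Ioc 1 X) :=
    ((intervalIntegrable_iff_integrableOn_Ioc_of_le hX).1
      (intervalIntegral.intervalIntegrable_rpow (Or.inr (notMem_uIcc_of_lt one_pos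
        (by linarith))))).const_mul B
  have hg_near' := integrableOn_of_nonneg_of_le h_near measurableSet_Ioc hg
    (fun s hs => hg0 s ⟨hs.1, hs.2.trans hX⟩) hg_near
  have hg_far' := integrableOn_of_nonneg_of_le h_far measurableSet_Ioc hg
    (fun s hs => hg0 s ⟨zero_lt_one.trans hs.1, hs.2⟩) hg_far
  rw [← Ioc_union_Ioc_eq_Ioc zero_le_one hX,
    setIntegral_union (Ioc_disjoint_Ioc_of_le le_rfl) measurableSet_Ioc hg_near' hg_far']
  refine ⟨hg_near'.union hg_far', add_le_add ?_ ?_⟩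
  · calc ∫ s in Ioc 0 1, g s ≤ ∫ s in Ioc 0 1, A * s ^ (-p) :=
          setIntegral_mono_on hg_near' h_near measurableSet_Ioc hg_near
      _ = A / (1 - p) := by
          rw [integral_const_mul, ← intervalIntegral.integral_of_le zero_le_one,
            integral_rpow (Or.inl (by linarith))]
          simp [Real.zero_rpow (show -p + 1 ≠ 0 by linarith)]
          ring
  · calc ∫ s in Ioc 1 X, g s ≤ ∫ s in Ioc 1 X, B * s ^ (-q) :=
          setIntegral_mono_on hg_far' h_far measurableSet_Ioc hg_far
      _ = B * ((X ^ (1 - q) - 1) / (1 - q)) := by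
          rw [integral_const_mul, ← intervalIntegral.integral_of_le hX,
            integral_rpow (Or.inr ⟨by contrapose! hq; linarith,
              notMem_uIcc_of_lt one_pos (by linarith)⟩)]
          simp only [Real.one_rpow, neg_add_eq_sub]

noncomputable def duhamelKernel (b β s : ℝ) : ℝ := s ^ (-b) * (1 + s) ^ (-β)

noncomputable def duhamelForcing (a σ τ : ℝ) : ℝ := τ ^ (-1 + a) * (1 + τ) ^ (1 - a - σ)

section Kernel

variable {b β : ℝ}

@[fun_prop]
lemma measurable_duhamelKernel (b β : ℝ) : Measurable (duhamelKernel b β) := by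
  unfold duhamelKernel
  fun_prop

lemma duhamelKernel_nonneg {s : ℝ} (hs : 0 ≤ s) : 0 ≤ duhamelKernel b β s := by
  unfold duhamelKernel
  positivity

lemma duhamelKernel_le_rpow_neg (hβ : 0 ≤ β) {s : ℝ} (hs : 0 ≤ s) :
    duhamelKernel b β s ≤ s ^ (-b) := by
  rw [duhamelKernel]
  exact mul_le_of_le_one_right (by positivity)
    (Real.rpow_le_one_of_one_le_of_nonpos (by linarith) (by linarith))

lemma duhamelKernel_le_rpow_neg_add (hβ : 0 ≤ β) {s : ℝ} (hs : 0 < s) :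
    duhamelKernel b β s ≤ s ^ (-(b + β)) := by
  rw [duhamelKernel, neg_add, Real.rpow_add hs]
  exact mul_le_mul_of_nonneg_left
    (Real.rpow_le_rpow_of_nonpos hs (by linarith) (by linarith)) (by positivity)

lemma min_mul_rpow_le_duhamelKernel {s : ℝ} (hs : s ∈ Icc 0 1) :
    min 1 (2 ^ (-β)) * s ^ (-b) ≤ duhamelKernel b β s := by
  rw [duhamelKernel, mul_comm]
  gcongr
  · exact Real.rpow_nonneg hs.1 _
  · exact min_le_one_add_rpow_of_mem_Icc hs _

lemma exists_pos_le_duhamelKernel {L U : ℝ} (hL : 0 < L) (hLU : L ≤ U) :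
    ∃ c > 0, ∀ s ∈ Icc L U, c ≤ duhamelKernel b β s := by
  have hU : 0 < U := hL.trans_le hLU
  refine ⟨min (L ^ (-b)) (U ^ (-b)) * min ((1 + L) ^ (-β)) ((1 + U) ^ (-β)), by positivity,
    fun s hs => ?_⟩
  have hs0 : 0 < s := hL.trans_le hs.1
  rw [duhamelKernel]
  gcongr
  · exact min_le_rpow_of_mem_Icc hL hs _
  · exact min_le_rpow_of_mem_Icc (by linarith) ⟨by linarith [hs.1], by linarith [hs.2]⟩ _

lemma integrableOn_duhamelKernel_and_setIntegral_le (hb : b < 1) (hbβ : 1 < b + β) {X : ℝ}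
    (hX : 1 ≤ X) :
    IntegrableOn (duhamelKernel b β) (Ioc 0 X) ∧
      ∫ s in Ioc 0 X, duhamelKernel b β s ≤ 1 / (1 - b) + 1 / (b + β - 1) := by
  have hβ : 0 ≤ β := by linarith
  obtain ⟨hint, hle⟩ := integrableOn_Ioc_zero_and_setIntegral_le_of_le_rpow (A := 1) (B := 1)
    (q := b + β) hb (by linarith) hX (measurable_duhamelKernel b β)
    (fun s hs => duhamelKernel_nonneg hs.1.le)
    (fun s hs => (duhamelKernel_le_rpow_neg hβ hs.1.le).trans_eq (one_mul _).symm)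
    (fun s hs => (duhamelKernel_le_rpow_neg_add hβ (zero_lt_one.trans hs.1)).trans_eq
      (one_mul _).symm)
  refine ⟨hint, hle.trans ?_⟩
  have hXq : 0 ≤ X ^ (1 - (b + β)) := by positivity
  have hq : 0 < b + β - 1 := by linarith
  rw [one_mul, show (X ^ (1 - (b + β)) - 1) / (1 - (b + β)) = (1 - X ^ (1 - (b + β))) / (b + β - 1)
    by rw [← neg_div_neg_eq]; ring_nf]
  gcongr
  linarith

end Kernel

section Forcing

variable {a σ : ℝ}

@[fun_prop]
lemma measurable_duhamelForcing (a σ : ℝ) : Measurable (duhamelForcing a σ) := by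
  unfold duhamelForcing
  fun_prop

lemma duhamelForcing_nonneg {τ : ℝ} (hτ : 0 ≤ τ) : 0 ≤ duhamelForcing a σ τ := by
  unfold duhamelForcing
  positivity

lemma duhamelForcing_le_of_mem_Ioc {τ : ℝ} (hτ : τ ∈ Ioc 0 1) :
    duhamelForcing a σ τ ≤ max 1 (2 ^ (1 - a - σ)) * τ ^ (-(1 - a)) := by
  rw [duhamelForcing, mul_comm, show -(1 - a) = -1 + a by ring]
  gcongr
  · exact Real.rpow_nonneg hτ.1.le _
  · exact one_add_rpow_le_of_mem_Icc (Ioc_subset_Icc_self hτ) _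

lemma duhamelForcing_le_of_one_le {τ : ℝ} (hτ : 1 ≤ τ) :
    duhamelForcing a σ τ ≤ max 1 (2 ^ (1 - a - σ)) * τ ^ (-σ) := by
  have hτ0 : 0 < τ := by linarith
  calc duhamelForcing a σ τ
      ≤ τ ^ (-1 + a) * (max 1 (2 ^ (1 - a - σ)) * τ ^ (1 - a - σ)) := by
        rw [duhamelForcing]
        gcongr
        exact one_add_rpow_le_of_one_le hτ _
    _ = max 1 (2 ^ (1 - a - σ)) * τ ^ (-σ) := by
        rw [mul_left_comm, ← Real.rpow_add hτ0]
        ring_nf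

lemma min_mul_rpow_le_duhamelForcing {τ : ℝ} (hτ : τ ∈ Icc 0 1) :
    min 1 (2 ^ (1 - a - σ)) * τ ^ (-1 + a) ≤ duhamelForcing a σ τ := by
  rw [duhamelForcing, mul_comm]
  gcongr
  · exact Real.rpow_nonneg hτ.1 _
  · exact min_le_one_add_rpow_of_mem_Icc hτ _

lemma exists_pos_le_duhamelForcing {L U : ℝ} (hL : 0 < L) (hLU : L ≤ U) :
    ∃ c > 0, ∀ τ ∈ Icc L U, c ≤ duhamelForcing a σ τ := by
  have hU : 0 < U := hL.trans_le hLU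
  refine ⟨min (L ^ (-1 + a)) (U ^ (-1 + a)) *
    min ((1 + L) ^ (1 - a - σ)) ((1 + U) ^ (1 - a - σ)), by positivity, fun τ hτ => ?_⟩
  have hτ0 : 0 < τ := hL.trans_le hτ.1
  rw [duhamelForcing]
  gcongr
  · exact min_le_rpow_of_mem_Icc hL hτ _
  · exact min_le_rpow_of_mem_Icc (by linarith) ⟨by linarith [hτ.1], by linarith [hτ.2]⟩ _

lemma integrableOn_duhamelForcing_and_setIntegral_le {m : ℝ} (ha : 0 < a) (hm : m < 1)
    (hmσ : m ≤ σ) {X : ℝ} (hX : 1 ≤ X) :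
    IntegrableOn (duhamelForcing a σ) (Ioc 0 X) ∧ ∫ τ in Ioc 0 X, duhamelForcing a σ τ ≤
      max 1 (2 ^ (1 - a - σ)) * (1 / a + X ^ (1 - m) / (1 - m)) := by
  obtain ⟨hint, hle⟩ := integrableOn_Ioc_zero_and_setIntegral_le_of_le_rpow (p := 1 - a) (q := m)
    (by linarith) hm.ne hX (measurable_duhamelForcing a σ)
    (fun τ hτ => duhamelForcing_nonneg hτ.1.le) (fun τ hτ => duhamelForcing_le_of_mem_Ioc hτ)
    (fun τ hτ => (duhamelForcing_le_of_one_le hτ.1.le).trans <| by gcongr; exact hτ.1.le)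
  refine ⟨hint, hle.trans ?_⟩
  have hm1 : 0 < 1 - m := by linarith
  rw [sub_sub_cancel, mul_add, mul_one_div]
  gcongr
  linarith

end Forcing

section Estimates

variable {a b β σ t : ℝ}

lemma integrableOn_duhamel_Ioc_zero_half_and_setIntegral_le {m : ℝ} (ha : 0 < a) (hm : m < 1)
    (hmσ : m ≤ σ) (hβ : 0 ≤ β) (hbβ : 1 ≤ b + β) (ht : 2 ≤ t) :
    IntegrableOn (fun τ => duhamelKernel b β (t - τ) * duhamelForcing a σ τ) (Ioc 0 (t / 2)) ∧
      ∫ τ in Ioc 0 (t / 2), duhamelKernel b β (t - τ) * duhamelForcing a σ τ ≤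
        max 1 (2 ^ (1 - a - σ)) * (1 / a + 1 / (1 - m)) * (t / 2) ^ (-m) := by
  set T := t / 2 with hT_def
  have hT : 1 ≤ T := by linarith
  obtain ⟨hF, hF_le⟩ := integrableOn_duhamelForcing_and_setIntegral_le ha hm hmσ hT
  have h_le : ∀ τ ∈ Ioc 0 T, duhamelKernel b β (t - τ) * duhamelForcing a σ τ ≤
      T ^ (-(b + β)) * duhamelForcing a σ τ := fun τ hτ => by
    have hτT : T ≤ t - τ := by linarith [hτ.2]
    gcongr
    · exact duhamelForcing_nonneg hτ.1.le
    · calc duhamelKernel b β (t - τ) ≤ (t - τ) ^ (-(b + β)) :=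
            duhamelKernel_le_rpow_neg_add hβ (by linarith)
        _ ≤ T ^ (-(b + β)) := Real.rpow_le_rpow_of_nonpos (by linarith) hτT (by linarith)
  have h_int := integrableOn_of_nonneg_of_le (hF.const_mul _) measurableSet_Ioc (by fun_prop)
    (fun τ hτ => mul_nonneg (duhamelKernel_nonneg (by linarith [hτ.2]))
      (duhamelForcing_nonneg hτ.1.le)) h_le
  refine ⟨h_int, ?_⟩
  have hm1 : 0 < 1 - m := by linarith
  calc ∫ τ in Ioc 0 T, duhamelKernel b β (t - τ) * duhamelForcing a σ τ
      ≤ ∫ τ in Ioc 0 T, T ^ (-(b + β)) * duhamelForcing a σ τ :=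
        setIntegral_mono_on h_int (hF.const_mul _) measurableSet_Ioc h_le
    _ = T ^ (-(b + β)) * ∫ τ in Ioc 0 T, duhamelForcing a σ τ := integral_const_mul _ _
    _ ≤ T ^ (-(b + β)) * (max 1 (2 ^ (1 - a - σ)) * (1 / a + T ^ (1 - m) / (1 - m))) := by
        gcongr
    _ = max 1 (2 ^ (1 - a - σ)) * (T ^ (-(b + β)) / a + T ^ (-(b + β) + (1 - m)) / (1 - m)) := by
        rw [Real.rpow_add (by linarith)]
        ring
    _ ≤ max 1 (2 ^ (1 - a - σ)) * (T ^ (-m) / a + T ^ (-m) / (1 - m)) := by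
        have h₁ : T ^ (-(b + β)) ≤ T ^ (-m) := Real.rpow_le_rpow_of_exponent_le hT (by linarith)
        have h₂ : T ^ (-(b + β) + (1 - m)) ≤ T ^ (-m) :=
          Real.rpow_le_rpow_of_exponent_le hT (by linarith)
        gcongr
    _ = max 1 (2 ^ (1 - a - σ)) * (1 / a + 1 / (1 - m)) * T ^ (-m) := by ring

lemma integrableOn_duhamel_Ioc_half_and_setIntegral_le {m : ℝ} (hm : 0 ≤ m) (hmσ : m ≤ σ)
    (hb : b < 1) (hbβ : 1 < b + β) (ht : 2 ≤ t) :
    IntegrableOn (fun τ => duhamelKernel b β (t - τ) * duhamelForcing a σ τ) (Ioc (t / 2) t) ∧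
      ∫ τ in Ioc (t / 2) t, duhamelKernel b β (t - τ) * duhamelForcing a σ τ ≤
        max 1 (2 ^ (1 - a - σ)) * (1 / (1 - b) + 1 / (b + β - 1)) * (t / 2) ^ (-m) := by
  set T := t / 2 with hT_def
  have hT : 1 ≤ T := by linarith
  have htT : t - T = T := by ring
  obtain ⟨hK, hK_le⟩ := integrableOn_duhamelKernel_and_setIntegral_le hb hbβ hT
  have hK' : IntegrableOn (fun τ => duhamelKernel b β (t - τ)) (Ioc T t) := by
    simpa only [htT, sub_zero] using integrableOn_Ioc_comp_sub_left (by linarith) hK t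
  set M : ℝ := max 1 (2 ^ (1 - a - σ))
  have h_le : ∀ τ ∈ Ioc T t, duhamelKernel b β (t - τ) * duhamelForcing a σ τ ≤
      M * T ^ (-m) * duhamelKernel b β (t - τ) := fun τ hτ => by
    have hTτ : 1 ≤ τ := hT.trans hτ.1.le
    rw [mul_comm]
    gcongr
    · exact duhamelKernel_nonneg (by linarith [hτ.2])
    · calc duhamelForcing a σ τ ≤ M * τ ^ (-σ) := duhamelForcing_le_of_one_le hTτ
        _ ≤ M * τ ^ (-m) := by gcongr
        _ ≤ M * T ^ (-m) := mul_le_mul_of_nonneg_left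
            (Real.rpow_le_rpow_of_nonpos (by linarith) hτ.1.le (by linarith))
            (zero_le_one.trans (le_max_left _ _))
  have h_int := integrableOn_of_nonneg_of_le (hK'.const_mul _) measurableSet_Ioc (by fun_prop)
    (fun τ hτ => mul_nonneg (duhamelKernel_nonneg (by linarith [hτ.2]))
      (duhamelForcing_nonneg (by linarith [hτ.1]))) h_le
  refine ⟨h_int, ?_⟩
  calc ∫ τ in Ioc T t, duhamelKernel b β (t - τ) * duhamelForcing a σ τ
      ≤ ∫ τ in Ioc T t, M * T ^ (-m) * duhamelKernel b β (t - τ) :=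
        setIntegral_mono_on h_int (hK'.const_mul _) measurableSet_Ioc h_le
    _ = M * T ^ (-m) * ∫ s in Ioc 0 T, duhamelKernel b β s := by
        have h_refl := setIntegral_Ioc_comp_sub_left (duhamelKernel b β) (by linarith : 0 ≤ T) t
        rw [htT, sub_zero] at h_refl
        rw [integral_const_mul, h_refl]
    _ ≤ M * T ^ (-m) * (1 / (1 - b) + 1 / (b + β - 1)) := by gcongr
    _ = M * (1 / (1 - b) + 1 / (b + β - 1)) * T ^ (-m) := by ring

lemma exists_setIntegral_duhamel_le (ha : 0 < a) (hb : 0 < b) (hb1 : b < 1) (hσ : 0 < σ)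
    (hbβ : 1 < b + β) : ∃ K, 0 ≤ K ∧ ∀ t, 2 ≤ t →
      ∫ τ in Ioc 0 t, duhamelKernel b β (t - τ) * duhamelForcing a σ τ ≤
        K * t ^ (-min σ b) := by
  set m := min σ b
  have hm0 : 0 ≤ m := (lt_min hσ hb).le
  have hm1 : 0 < 1 - m := by linarith [min_le_right σ b]
  have hb1' : 0 < 1 - b := by linarith
  have hbβ' : 0 < b + β - 1 := by linarith
  set M : ℝ := max 1 (2 ^ (1 - a - σ))
  have hM : 0 ≤ M := zero_le_one.trans (le_max_left _ _)
  refine ⟨2 ^ m * (M * (1 / a + 1 / (1 - m)) + M * (1 / (1 - b) + 1 / (b + β - 1))),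
    by positivity, fun t ht => ?_⟩
  obtain ⟨h_near, h_near_le⟩ := integrableOn_duhamel_Ioc_zero_half_and_setIntegral_le
    (b := b) (β := β) ha (by linarith) (min_le_left σ b) (by linarith) hbβ.le ht
  obtain ⟨h_far, h_far_le⟩ := integrableOn_duhamel_Ioc_half_and_setIntegral_le
    (a := a) hm0 (min_le_left σ b) hb1 hbβ ht
  have h_half : (t / 2) ^ (-m) = 2 ^ m * t ^ (-m) := by
    rw [Real.div_rpow (by linarith) zero_le_two, Real.rpow_neg zero_le_two, div_inv_eq_mul,
      mul_comm]
  rw [← Ioc_union_Ioc_eq_Ioc (by linarith : (0:ℝ) ≤ t / 2) (by linarith : t / 2 ≤ t),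
    setIntegral_union (Ioc_disjoint_Ioc_of_le le_rfl) measurableSet_Ioc h_near h_far]
  exact (add_le_add h_near_le h_far_le).trans_eq (by rw [h_half]; ring)

lemma setIntegral_duhamel_eq_zero_of_nonpos (ha : a ≤ 0) (ht : 1 < t) :
    ∫ τ in Ioc 0 t, duhamelKernel b β (t - τ) * duhamelForcing a σ τ = 0 := by
  refine integral_undef fun h_int => not_integrableOn_Ioc_zero_one_rpow (r := -1 + a)
    (by linarith) ?_
  obtain ⟨c, hc, hc_le⟩ := exists_pos_le_duhamelKernel (b := b) (β := β) (by linarith : 0 < t - 1)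
    (by linarith : t - 1 ≤ t)
  refine integrableOn_of_const_mul_le (IntegrableOn.mono_set h_int (Ioc_subset_Ioc_right ht.le))
    measurableSet_Ioc (by positivity : 0 < c * min 1 (2 ^ (1 - a - σ))) (by fun_prop)
    (fun τ hτ => Real.rpow_nonneg hτ.1.le _) fun τ hτ => ?_
  rw [mul_assoc]
  exact mul_le_mul (hc_le _ ⟨by linarith [hτ.2], by linarith [hτ.1]⟩)
    (min_mul_rpow_le_duhamelForcing (Ioc_subset_Icc_self hτ))
    (mul_nonneg (by positivity) (Real.rpow_nonneg hτ.1.le _))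
    (duhamelKernel_nonneg (by linarith [hτ.2]))

lemma setIntegral_duhamel_eq_zero_of_one_le (hb : 1 ≤ b) (ht : 1 < t) :
    ∫ τ in Ioc 0 t, duhamelKernel b β (t - τ) * duhamelForcing a σ τ = 0 := by
  refine integral_undef fun h_int => not_integrableOn_Ioc_zero_one_rpow (r := -b)
    (by linarith) ?_
  obtain ⟨c, hc, hc_le⟩ := exists_pos_le_duhamelForcing (a := a) (σ := σ)
    (by linarith : 0 < t - 1) (by linarith : t - 1 ≤ t)
  have h_sing : IntegrableOn (fun τ => (t - τ) ^ (-b)) (Ioc (t - 1) t) := by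
    refine integrableOn_of_const_mul_le
      (IntegrableOn.mono_set h_int (Ioc_subset_Ioc_left (by linarith))) measurableSet_Ioc
      (by positivity : 0 < min 1 (2 ^ (-β)) * c) (by fun_prop)
      (fun τ hτ => Real.rpow_nonneg (by linarith [hτ.2]) _) fun τ hτ => ?_
    rw [mul_right_comm]
    exact mul_le_mul (min_mul_rpow_le_duhamelKernel ⟨by linarith [hτ.2], by linarith [hτ.1]⟩)
      (hc_le _ (Ioc_subset_Icc_self hτ)) hc.le (duhamelKernel_nonneg (by linarith [hτ.2]))
  simpa using integrableOn_Ioc_comp_sub_left (by linarith) h_sing t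

end Estimates

theorem duhamel_min_decay_general {E F : Type*} [NormedAddCommGroup E] [NormedAddCommGroup F]
    (v : ℝ → E) (f : F) (a b β σ₂ C : ℝ)
    (hb : 0 < b) (hσ : 0 < σ₂) (hβ : 1 - b < β) (hC : 0 < C)
    (hyp : ∀ t : ℝ, 0 < t →
      ‖v t‖ ≤ C * t ^ (-b) * ‖f‖ +
        ‖f‖ * ∫ τ in Set.Ioc (0:ℝ) t,
          (t - τ) ^ (-b) * (1 + t - τ) ^ (-β) * τ ^ (-1 + a) * (1 + τ) ^ (1 - a - σ₂)) :
    ∃ C' > (0:ℝ), ∀ t : ℝ, 2 ≤ t → ‖v t‖ ≤ C' * t ^ (-(min σ₂ b)) * ‖f‖ := by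
  obtain ⟨K, hK, hK_le⟩ : ∃ K, 0 ≤ K ∧ ∀ t, 2 ≤ t →
      ∫ τ in Ioc 0 t, duhamelKernel b β (t - τ) * duhamelForcing a σ₂ τ ≤
        K * t ^ (-min σ₂ b) := by
    rcases le_or_gt a 0 with ha | ha
    · exact ⟨0, le_rfl, fun t ht => by
        simp [setIntegral_duhamel_eq_zero_of_nonpos ha (by linarith : 1 < t)]⟩
    rcases le_or_gt 1 b with hb1 | hb1
    · exact ⟨0, le_rfl, fun t ht => by
        simp [setIntegral_duhamel_eq_zero_of_one_le hb1 (by linarith : 1 < t)]⟩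
    exact exists_setIntegral_duhamel_le ha hb hb1 hσ (by linarith)
  refine ⟨C + K, by positivity, fun t ht => ?_⟩
  have h_decay : t ^ (-b) ≤ t ^ (-min σ₂ b) :=
    Real.rpow_le_rpow_of_exponent_le (by linarith) (by simp)
  have h_integral := hK_le t ht
  simp only [duhamelKernel, duhamelForcing, ← add_sub_assoc, ← mul_assoc] at h_integral
  calc ‖v t‖ ≤ C * t ^ (-b) * ‖f‖ + ‖f‖ * ∫ τ in Ioc 0 t,
        (t - τ) ^ (-b) * (1 + t - τ) ^ (-β) * τ ^ (-1 + a) * (1 + τ) ^ (1 - a - σ₂) :=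
        hyp t (by linarith)
    _ ≤ C * t ^ (-min σ₂ b) * ‖f‖ + ‖f‖ * (K * t ^ (-min σ₂ b)) := by gcongr
    _ = (C + K) * t ^ (-min σ₂ b) * ‖f‖ := by ring

/-- Decay rate of a Duhamel term: if
`‖v(t)‖ ≤ C t^{−b}‖f‖ + ‖f‖ ∫₀ᵗ (t−τ)^{−b}(1+t−τ)^{−β} τ^{−1+a}(1+τ)^{1−a−σ₂} dτ`
with `0 ≤ a < 1`, `σ₂ > 0`, `b > 0`, `β > 1 − b`, then for `t ≥ 2`,
`‖v(t)‖ ≤ C' t^{−min{σ₂,b}}‖f‖`. -/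
theorem duhamel_min_decay {E F : Type*} [NormedAddCommGroup E] [NormedAddCommGroup F]
    (v : ℝ → E) (f : F) (a b β σ₂ C : ℝ)
    (ha0 : 0 ≤ a) (ha1 : a < 1) (hb : 0 < b) (hσ : 0 < σ₂) (hβ : 1 - b < β) (hC : 0 < C)
    (hyp : ∀ t : ℝ, 0 < t →
      ‖v t‖ ≤ C * t ^ (-b) * ‖f‖ +
        ‖f‖ * ∫ τ in Set.Ioc (0:ℝ) t,
          (t - τ) ^ (-b) * (1 + t - τ) ^ (-β) * τ ^ (-1 + a) * (1 + τ) ^ (1 - a - σ₂)) :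
    ∃ C' > (0:ℝ), ∀ t : ℝ, 2 ≤ t → ‖v t‖ ≤ C' * t ^ (-(min σ₂ b)) * ‖f‖ :=
  duhamel_min_decay_general v f a b β σ₂ C hb hσ hβ hC hyp
end
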